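/- arXiv:1503.01811 — 3 statements merged into one kernel-verified Lean document; each statement's English description precedes it below -/
import Mathlib

section
/- Suppose the feasible set {z ∈ [−1,1]^n : (1/n) F z ≥ b componentwise} is nonempty. Then for any g ∈ [−1,1]^n, min over z in this feasible set of (1/n)⟨z, g⟩ equals sup over σ ≥ 0 in ℝ^p of (⟨b, σ⟩ − (1/n)‖F^⊤ σ − g‖_1). -/
/-!
With `c = 1/n`, for `σ ≥ 0` and `z` in the box, the Lagrangian `c⟨z, g⟩ + ⟨σ, b - cFz⟩` is at
most the primal objective when `z` is feasible, and at least the dual objective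
`⟨b, σ⟩ - c‖Fᵀσ - g‖₁`, with equality at `z = sign (Fᵀσ - g)`; this gives weak duality. For
strong duality, take `w` below the primal infimum: the compact convex image of the box under
`z ↦ (cFz, c⟨z, g⟩)` misses the closed convex set `{y ≥ b} × (-∞, w]`, and a strictly
separating functional has nonnegative weights `σ` on `y` and a negative weight on the last
coordinate (nonzero by feasibility). After normalisation, `σ` is a dual point of value above `w`.
-/

open Finset

lemma nonneg_of_forall_lt_add_mul {a x d : ℝ} (h : ∀ s : ℝ, 0 ≤ s → a < x + s * d) : 0 ≤ d := by
  by_contra! hd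
  have hax : 0 ≤ x - a := by linarith [h 0 le_rfl]
  have := h ((x - a) / -d) (div_nonneg hax (by linarith))
  rw [div_neg, neg_mul, div_mul_cancel₀ _ hd.ne] at this
  linarith

lemma mul_le_abs_of_mem_Icc {z : ℝ} (hz : -1 ≤ z ∧ z ≤ 1) (w : ℝ) : z * w ≤ |w| := calc
  z * w ≤ |z| * |w| := (le_abs_self _).trans (abs_mul _ _).le
  _ ≤ |w| := mul_le_of_le_one_left (abs_nonneg _) (abs_le.2 hz)

lemma sign_mem_Icc (x : ℝ) : -1 ≤ (SignType.sign x : ℝ) ∧ (SignType.sign x : ℝ) ≤ 1 := by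
  rcases lt_trichotomy x 0 with h | h | h <;> simp [h, sign_neg, sign_pos]

lemma StrongDual.apply_prod_eq_sum {ι : Type*} [Fintype ι] [DecidableEq ι]
    (f : StrongDual ℝ ((ι → ℝ) × ℝ)) (y : ι → ℝ) (t : ℝ) :
    f (y, t) = ∑ i, y i * f (Pi.single i 1, 0) + t * f (0, 1) := by
  have hyt : (y, t) =
      ∑ i, y i • ((Pi.single i 1 : ι → ℝ), (0 : ℝ)) + t • ((0 : ι → ℝ), (1 : ℝ)) := by
    ext
    · simp [Prod.fst_sum, Pi.single_apply]
    · simp [Prod.snd_sum]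
  rw [hyt, map_add, map_sum, map_smul]
  simp only [map_smul, smul_eq_mul]

theorem exists_nonneg_multiplier_lt_lagrangian {E ι : Type*} [AddCommGroup E] [Module ℝ E]
    [TopologicalSpace E] [Fintype ι] {B : Set E} (hBconv : Convex ℝ B) (hBcomp : IsCompact B)
    (A : E →L[ℝ] ι → ℝ) (φ : E →L[ℝ] ℝ) {b : ι → ℝ} (hfeas : ∃ z ∈ B, b ≤ A z) {w : ℝ}
    (hw : ∀ z ∈ B, b ≤ A z → w < φ z) :
    ∃ σ : ι → ℝ, 0 ≤ σ ∧ ∀ z ∈ B, w < φ z + ∑ i, σ i * (b i - A z i) := by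
  classical
  have hdisj : Disjoint (A.prod φ '' B) (Set.Ici b ×ˢ Set.Iic w) := by
    rw [Set.disjoint_left]
    rintro _ ⟨z, hz, rfl⟩ ⟨hAz, hφz⟩
    exact (hw z hz hAz).not_ge hφz
  obtain ⟨f, u, v, hfB, huv, hfD⟩ := geometric_hahn_banach_compact_closed
    (hBconv.linear_image (A.prod φ).toLinearMap) (hBcomp.image (A.prod φ).continuous)
    (convex_Ici b |>.prod (convex_Iic w)) (isClosed_Ici.prod isClosed_Iic) hdisj
  set σ : ι → ℝ := fun i => f (Pi.single i 1, 0)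
  set τ := f (0, 1)
  have hf : ∀ y t, f (y, t) = ∑ i, y i * σ i + t * τ := f.apply_prod_eq_sum
  have hσ : 0 ≤ σ := fun i => nonneg_of_forall_lt_add_mul (a := v) (x := f (b, w)) fun s hs => by
    have hmem : (b + s • Pi.single i 1, w) ∈ Set.Ici b ×ˢ Set.Iic w :=
      Set.mk_mem_prod (Set.mem_Ici.2 <|
        le_add_of_nonneg_right (smul_nonneg hs (Pi.single_nonneg.2 zero_le_one)))
        Set.self_mem_Iic
    have hray : (b + s • Pi.single i 1, w) = (b, w) + s • (Pi.single i 1, 0) := by simp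
    simpa only [hray, map_add, map_smul, smul_eq_mul] using hfD _ hmem
  have hτ : 0 ≤ -τ := nonneg_of_forall_lt_add_mul (a := v) (x := f (b, w)) fun s hs => by
    have hmem : (b, w - s) ∈ Set.Ici b ×ˢ Set.Iic w :=
      Set.mk_mem_prod Set.self_mem_Ici (sub_le_self w hs)
    have hray : (b, w - s) = (b, w) + s • -(0, 1) := by ext <;> simp [sub_eq_add_neg]
    simpa only [hray, map_add, map_smul, map_neg, smul_eq_mul] using hfD _ hmem
  have hgap : ∀ z ∈ B, 0 < ∑ i, σ i * (b i - A z i) + τ * (w - φ z) := fun z hz => by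
    have hlt : f (A z, φ z) < f (b, w) := (hfB _ ⟨z, hz, rfl⟩).trans <|
      huv.trans (hfD _ (Set.mk_mem_prod Set.self_mem_Ici Set.self_mem_Iic))
    rw [hf (A z), hf b] at hlt
    have hsum : ∑ i, σ i * (b i - A z i) = ∑ i, b i * σ i - ∑ i, A z i * σ i := by
      rw [← sum_sub_distrib]
      exact sum_congr rfl fun i _ => by ring
    linarith
  obtain ⟨z₀, hz₀, hAz₀⟩ := hfeas
  have hτ' : 0 < -τ := by
    refine hτ.lt_of_ne' fun h => ?_
    have := hgap z₀ hz₀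
    rw [neg_eq_zero.1 h, zero_mul, add_zero] at this
    exact this.not_ge <| sum_nonpos fun i _ =>
      mul_nonpos_of_nonneg_of_nonpos (hσ i) (sub_nonpos.2 (hAz₀ i))
  refine ⟨(-τ)⁻¹ • σ, smul_nonneg (inv_nonneg.2 hτ) hσ, fun z hz => ?_⟩
  simp only [Pi.smul_apply, smul_eq_mul, mul_assoc, ← mul_sum]
  rw [← sub_lt_iff_lt_add', lt_inv_mul_iff₀ hτ']
  linarith [hgap z hz]

section LinearProgram

variable {m n : Type*} [Fintype m] [Fintype n]

lemma lagrangian_eq (c : ℝ) (F : m → n → ℝ) (b : m → ℝ) (g : n → ℝ) (σ : m → ℝ) (z : n → ℝ) :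
    c * ∑ j, z j * g j + ∑ i, σ i * (b i - c * ∑ j, F i j * z j)
      = ∑ i, b i * σ i - c * ∑ j, z j * (∑ i, F i j * σ i - g j) := by
  simp only [mul_sub, sum_sub_distrib, mul_sum]
  rw [sum_comm (f := fun i j => σ i * (c * (F i j * z j)))]
  simp only [mul_comm, mul_left_comm]
  ring

lemma dual_le_lagrangian {c : ℝ} (hc : 0 ≤ c) (F : m → n → ℝ) (b : m → ℝ) (g : n → ℝ)
    (σ : m → ℝ) {z : n → ℝ} (hz : ∀ j, -1 ≤ z j ∧ z j ≤ 1) :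
    ∑ i, b i * σ i - c * ∑ j, |∑ i, F i j * σ i - g j|
      ≤ c * ∑ j, z j * g j + ∑ i, σ i * (b i - c * ∑ j, F i j * z j) := by
  rw [lagrangian_eq]
  gcongr
  exact mul_le_abs_of_mem_Icc (hz _) _

lemma lagrangian_sign_eq_dual (c : ℝ) (F : m → n → ℝ) (b : m → ℝ) (g : n → ℝ) (σ : m → ℝ) :
    c * ∑ j, (SignType.sign (∑ i, F i j * σ i - g j) : ℝ) * g j
      + ∑ i, σ i * (b i - c * ∑ j, F i j * SignType.sign (∑ i, F i j * σ i - g j))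
      = ∑ i, b i * σ i - c * ∑ j, |∑ i, F i j * σ i - g j| := by
  simp only [lagrangian_eq, sign_mul_self]

end LinearProgram

theorem lp_strong_duality_inner_game_general (n p : ℕ)
    (F : Fin p → Fin n → ℝ)
    (b : Fin p → ℝ) (g : Fin n → ℝ)
    (hfeas : ∃ z : Fin n → ℝ, (∀ j, -1 ≤ z j ∧ z j ≤ 1) ∧
      ∀ i, b i ≤ (1 / (n : ℝ)) * ∑ j, F i j * z j) :
    sInf {v : ℝ | ∃ z : Fin n → ℝ, (∀ j, -1 ≤ z j ∧ z j ≤ 1) ∧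
        (∀ i, b i ≤ (1 / (n : ℝ)) * ∑ j, F i j * z j) ∧
        v = (1 / (n : ℝ)) * ∑ j, z j * g j}
    = sSup {v : ℝ | ∃ σ : Fin p → ℝ, (∀ i, 0 ≤ σ i) ∧
        v = (∑ i, b i * σ i) - (1 / (n : ℝ)) * ∑ j, |(∑ i, F i j * σ i) - g j|} := by
  set c : ℝ := 1 / n
  have hc : 0 ≤ c := by positivity
  set P := {v : ℝ | ∃ z : Fin n → ℝ, (∀ j, -1 ≤ z j ∧ z j ≤ 1) ∧
    (∀ i, b i ≤ c * ∑ j, F i j * z j) ∧ v = c * ∑ j, z j * g j}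
  set Q := {v : ℝ | ∃ σ : Fin p → ℝ, (∀ i, 0 ≤ σ i) ∧
    v = (∑ i, b i * σ i) - c * ∑ j, |(∑ i, F i j * σ i) - g j|}
  have hweak : ∀ q ∈ Q, ∀ v ∈ P, q ≤ v := by
    rintro _ ⟨σ, hσ, rfl⟩ _ ⟨z, hz, hFz, rfl⟩
    refine (dual_le_lagrangian hc F b g σ hz).trans (add_le_of_nonpos_right ?_)
    exact sum_nonpos fun i _ => mul_nonpos_of_nonneg_of_nonpos (hσ i) (sub_nonpos.2 (hFz i))
  obtain ⟨z₀, hz₀, hFz₀⟩ := hfeas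
  have hP : c * ∑ j, z₀ j * g j ∈ P := ⟨z₀, hz₀, hFz₀, rfl⟩
  have hQ : -(c * ∑ j, |g j|) ∈ Q := ⟨0, fun _ => le_rfl, by simp⟩
  refine le_antisymm (le_of_forall_lt fun w hw => ?_)
    (csSup_le ⟨_, hQ⟩ fun q hq => le_csInf ⟨_, hP⟩ (hweak q hq))
  let A : (Fin n → ℝ) →L[ℝ] Fin p → ℝ :=
    LinearMap.toContinuousLinearMap (c • Matrix.mulVecLin F)
  let φ : (Fin n → ℝ) →L[ℝ] ℝ :=
    LinearMap.toContinuousLinearMap (c • Fintype.linearCombination ℝ g)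
  obtain ⟨σ, hσ, hlag⟩ := exists_nonneg_multiplier_lt_lagrangian
    (B := Set.univ.pi fun _ => Set.Icc (-1) 1) (convex_pi fun _ _ => convex_Icc _ _)
    (isCompact_univ_pi fun _ => isCompact_Icc) A φ ⟨z₀, fun j _ => hz₀ j, hFz₀⟩ fun z hz hAz =>
      hw.trans_le (csInf_le ⟨_, hweak _ hQ⟩ ⟨z, fun j => hz j trivial, hAz, rfl⟩)
  have hdual : w < ∑ i, b i * σ i - c * ∑ j, |∑ i, F i j * σ i - g j| := by
    rw [← lagrangian_sign_eq_dual]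
    exact hlag _ fun j _ => sign_mem_Icc _
  exact hdual.trans_le (le_csSup ⟨_, fun q hq => hweak q hq _ hP⟩ ⟨σ, hσ, rfl⟩)

theorem lp_strong_duality_inner_game (n p : ℕ) (hn : 0 < n)
    (F : Fin p → Fin n → ℝ) (hF : ∀ i j, |F i j| ≤ 1)
    (b : Fin p → ℝ) (g : Fin n → ℝ) (hg : ∀ j, -1 ≤ g j ∧ g j ≤ 1)
    (hfeas : ∃ z : Fin n → ℝ, (∀ j, -1 ≤ z j ∧ z j ≤ 1) ∧
      ∀ i, b i ≤ (1 / (n : ℝ)) * ∑ j, F i j * z j) :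
    sInf {v : ℝ | ∃ z : Fin n → ℝ, (∀ j, -1 ≤ z j ∧ z j ≤ 1) ∧
        (∀ i, b i ≤ (1 / (n : ℝ)) * ∑ j, F i j * z j) ∧
        v = (1 / (n : ℝ)) * ∑ j, z j * g j}
    = sSup {v : ℝ | ∃ σ : Fin p → ℝ, (∀ i, 0 ≤ σ i) ∧
        v = (∑ i, b i * σ i) - (1 / (n : ℝ)) * ∑ j, |(∑ i, F i j * σ i) - g j|} :=
  lp_strong_duality_inner_game_general n p F b g hfeas
end

section
/- For any σ ≥ 0 in ℝ^p, define the clipped prediction g(σ) ∈ [−1,1]^n by g(σ)_j = ⟨x_j, σ⟩ if |⟨x_j, σ⟩| < 1 and g(σ)_j = sgn(⟨x_j, σ⟩) otherwise. Then for every z ∈ [−1,1]^n with (1/n) F z ≥ b, it holds that (1/n)⟨z, g(σ)⟩ ≥ −γ(σ), where γ(σ) = (1/n) Σ_j max(0, |⟨x_j, σ⟩| − 1) − ⟨b, σ⟩. -/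
/-!
Clipping `a` to `[-1, 1]` moves it by exactly `max 0 (|a| - 1)`, so against `z ∈ [-1, 1]ⁿ` the
correlation with the clipped prediction loses at most the slack sum. The unclipped correlation
`⟨z, Fᵀσ⟩` is at least `n ⟨b, σ⟩` because `σ ≥ 0` and `F z ≥ n b`.
-/

open Finset

noncomputable def clip (a : ℝ) : ℝ := if |a| < 1 then a else Real.sign a

theorem abs_sub_clip (a : ℝ) : |a - clip a| = max 0 (|a| - 1) := by
  unfold clip
  split_ifs with h
  · simp [(by linarith : |a| - 1 ≤ 0)]
  · rw [not_lt] at h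
    rw [max_eq_right (by linarith)]
    rcases lt_trichotomy a 0 with ha | rfl | ha
    · rw [Real.sign_of_neg ha, abs_of_neg ha, abs_of_nonpos (by linarith [abs_of_neg ha])]
      ring
    · norm_num at h
    · rw [Real.sign_of_pos ha, abs_of_pos ha, abs_of_nonneg (by linarith [abs_of_pos ha])]

theorem mul_le_mul_clip_add {z : ℝ} (hz : |z| ≤ 1) (a : ℝ) :
    z * a ≤ z * clip a + max 0 (|a| - 1) := by
  have : z * (a - clip a) ≤ |a - clip a| :=
    calc z * (a - clip a) ≤ |z| * |a - clip a| := by rw [← abs_mul]; exact le_abs_self _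
      _ ≤ |a - clip a| := mul_le_of_le_one_left (abs_nonneg _) hz
  rw [abs_sub_clip] at this
  linarith

theorem sum_mul_le_of_le_mulVec {ι κ : Type*} [Fintype ι] [Fintype κ]
    (F : ι → κ → ℝ) (b σ : ι → ℝ) (z : κ → ℝ) (c : ℝ) (hσ : ∀ i, 0 ≤ σ i)
    (hb : ∀ i, b i ≤ c * ∑ j, F i j * z j) :
    ∑ i, b i * σ i ≤ c * ∑ j, z j * ∑ i, F i j * σ i :=
  calc ∑ i, b i * σ i ≤ ∑ i, c * (∑ j, F i j * z j) * σ i :=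
        sum_le_sum fun i _ => mul_le_mul_of_nonneg_right (hb i) (hσ i)
    _ = c * ∑ j, z j * ∑ i, F i j * σ i := by
        simp_rw [mul_sum, sum_mul]
        rw [sum_comm]
        exact sum_congr rfl fun _ _ => sum_congr rfl fun _ _ => by ring

theorem clipped_prediction_correlation_bound_general (n p : ℕ)
    (F : Fin p → Fin n → ℝ)
    (b : Fin p → ℝ) (σ : Fin p → ℝ) (hσ : ∀ i, 0 ≤ σ i)
    (g : Fin n → ℝ)
    (hgdef : ∀ j, g j = if |∑ i, F i j * σ i| < 1 then ∑ i, F i j * σ i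
        else Real.sign (∑ i, F i j * σ i))
    (z : Fin n → ℝ) (hz : ∀ j, -1 ≤ z j ∧ z j ≤ 1)
    (hzb : ∀ i, b i ≤ (1 / (n : ℝ)) * ∑ j, F i j * z j) :
    (1 / (n : ℝ)) * ∑ j, z j * g j ≥
      -((1 / (n : ℝ)) * ∑ j, max 0 (|∑ i, F i j * σ i| - 1) - ∑ i, b i * σ i) := by
  set a : Fin n → ℝ := fun j => ∑ i, F i j * σ i
  have hc : (0 : ℝ) ≤ 1 / n := by positivity
  have duality := sum_mul_le_of_le_mulVec F b σ z _ hσ hzb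
  have clipping : ∑ j, z j * a j ≤ ∑ j, z j * g j + ∑ j, max 0 (|a j| - 1) := by
    rw [← sum_add_distrib]
    exact sum_le_sum fun j _ => hgdef j ▸ mul_le_mul_clip_add (abs_le.mpr (hz j)) (a j)
  have := mul_le_mul_of_nonneg_left clipping hc
  rw [mul_add] at this
  linarith

theorem clipped_prediction_correlation_bound (n p : ℕ) (hn : 0 < n)
    (F : Fin p → Fin n → ℝ) (hF : ∀ i j, |F i j| ≤ 1)
    (b : Fin p → ℝ) (σ : Fin p → ℝ) (hσ : ∀ i, 0 ≤ σ i)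
    (g : Fin n → ℝ)
    (hgdef : ∀ j, g j = if |∑ i, F i j * σ i| < 1 then ∑ i, F i j * σ i
        else Real.sign (∑ i, F i j * σ i))
    (z : Fin n → ℝ) (hz : ∀ j, -1 ≤ z j ∧ z j ≤ 1)
    (hzb : ∀ i, b i ≤ (1 / (n : ℝ)) * ∑ j, F i j * z j) :
    (1 / (n : ℝ)) * ∑ j, z j * g j ≥
      -((1 / (n : ℝ)) * ∑ j, max 0 (|∑ i, F i j * σ i| - 1) - ∑ i, b i * σ i) :=
  clipped_prediction_correlation_bound_general n p F b σ hσ g hgdef z hz hzb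
end

section
/- (Minimax value via strong duality) Suppose the feasible set Z = {z ∈ [−1,1]^n : (1/n) F z ≥ b} is nonempty. Then max over g ∈ [−1,1]^n of (min over z ∈ Z of (1/n)⟨z, g⟩) equals sup over σ ≥ 0 of −γ(σ), where γ(σ) = (1/n) Σ_j max(0, |⟨x_j, σ⟩| − 1) − ⟨b, σ⟩. -/
/-!
For fixed `g`, the inner minimum is a linear program over the box `[-1, 1]ⁿ`, and minimizing its
Lagrangian over the box gives the dual function `⟨b, σ⟩ - (1/n) ‖Fᵀσ - g‖₁`. Weak duality is
immediate. There is no duality gap: separate `(-b, w)` from the upward closure of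
`{(-Fz/n, ⟨z, g⟩/n) : z ∈ box}`, which is closed since the box is compact; the feasible point forces
the separating functional to weigh the objective coordinate positively, and normalizing it gives
the multipliers. Exchanging the suprema over `g` and `σ` then leaves, coordinatewise,
`min_{|g| ≤ 1} |g - t| = max 0 (|t| - 1)`.
-/

open Set Pointwise

theorem ContinuousLinearMap.apply_pi_prod_eq_sum {ι : Type*} [Fintype ι] [DecidableEq ι]
    (f : (ι → ℝ) × ℝ →L[ℝ] ℝ) (u : ι → ℝ) (t : ℝ) :
    f (u, t) = ∑ i, u i * f (Pi.single i 1, 0) + t * f (0, 1) := by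
  have hu : (u, t) = ∑ i, u i • ((Pi.single i 1 : ι → ℝ), (0 : ℝ)) + t • (0, 1) := by
    ext <;> simp [Prod.fst_sum, Prod.snd_sum, Finset.sum_apply, Pi.single_apply]
  simp only [hu, map_add, map_sum, map_smul, smul_eq_mul]

theorem nonneg_of_forall_lt_add_mul_s16 {a b c : ℝ} (h : ∀ T : ℝ, 0 ≤ T → a < b + T * c) :
    0 ≤ c := by
  by_contra! hc
  have := h ((b - a) / -c) (div_nonneg (by linarith [h 0 le_rfl]) (by linarith))
  have hT : (b - a) / -c * c = a - b := by field_simp [hc.ne]; ring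
  linarith

theorem exists_lagrange_multipliers_lt {E ι : Type*} [Fintype ι] [AddCommGroup E] [Module ℝ E]
    [TopologicalSpace E] {K : Set E} (hK : IsCompact K) (hKc : Convex ℝ K) (φ : E →L[ℝ] ℝ)
    (h : E →L[ℝ] ι → ℝ) (b : ι → ℝ) (hfeas : ∃ z ∈ K, b ≤ h z) {w : ℝ}
    (hw : ∀ z ∈ K, b ≤ h z → w < φ z) :
    ∃ σ : ι → ℝ, 0 ≤ σ ∧ ∀ z ∈ K, w < φ z + ∑ i, σ i * (b i - h z i) := by
  classical
  obtain ⟨z₀, hz₀K, hz₀⟩ := hfeas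
  set M : E →L[ℝ] (ι → ℝ) × ℝ := (-h).prod φ
  set S : Set ((ι → ℝ) × ℝ) := M '' K + Ici 0
  have hx : (-b, w) ∉ S := by
    rintro ⟨_, ⟨z, hz, rfl⟩, c, hc, hzc⟩
    obtain ⟨hc₁, hc₂⟩ := Prod.mk_le_mk.mp hc
    obtain ⟨hzc₁, hzc₂⟩ := Prod.mk.inj hzc
    refine (hw z hz ?_).not_ge ?_
    · simp only [M, ContinuousLinearMap.prod_apply, neg_apply] at hzc₁
      calc b ≤ b + c.1 := le_add_of_nonneg_right hc₁
        _ = h z := by linear_combination hzc₁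
    · simp only [M, ContinuousLinearMap.prod_apply] at hzc₂
      linarith
  obtain ⟨f, u, hfx, hfS⟩ := geometric_hahn_banach_point_closed
    ((hKc.linear_image M.toLinearMap).add (convex_Ici 0))
    (isClosed_Ici.add_left_of_isCompact (hK.image M.continuous)) hx
  have hmono : ∀ c ≥ 0, 0 ≤ f c := fun c hc => nonneg_of_forall_lt_add_mul_s16 fun T hT => by
    simpa using hfS _ (add_mem_add (mem_image_of_mem M hz₀K) (smul_nonneg hT hc))
  have hlag : ∀ z ∈ K,
      w * f (0, 1) < φ z * f (0, 1) + ∑ i, f (Pi.single i 1, 0) * (b i - h z i) := by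
    intro z hz
    have hz : f (-b, w) < f (-h z, φ z) :=
      hfx.trans (hfS _ ⟨M z, mem_image_of_mem M hz, 0, mem_Ici.2 le_rfl, add_zero _⟩)
    rw [f.apply_pi_prod_eq_sum (-b) w, f.apply_pi_prod_eq_sum (-h z) (φ z)] at hz
    simp only [Pi.neg_apply, neg_mul, Finset.sum_neg_distrib] at hz
    simp only [mul_comm (f _), sub_mul, Finset.sum_sub_distrib]
    linarith
  have hσ : ∀ i, 0 ≤ f (Pi.single i 1, 0) := fun i =>
    hmono _ ⟨Pi.single_nonneg.2 zero_le_one, le_rfl⟩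
  have hμ : 0 < f (0, 1) := by
    have hS : ∑ i, f (Pi.single i 1, 0) * (b i - h z₀ i) ≤ 0 := Finset.sum_nonpos fun i _ =>
      mul_nonpos_of_nonneg_of_nonpos (hσ i) (sub_nonpos.2 (hz₀ i))
    nlinarith [hlag z₀ hz₀K, hw z₀ hz₀K hz₀, hmono (0, 1) ⟨le_rfl, zero_le_one⟩]
  refine ⟨fun i => f (Pi.single i 1, 0) / f (0, 1), fun i => div_nonneg (hσ i) hμ.le,
    fun z hz => ?_⟩
  have e : ∑ i, f (Pi.single i 1, 0) / f (0, 1) * (b i - h z i)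
      = (∑ i, f (Pi.single i 1, 0) * (b i - h z i)) / f (0, 1) := by
    rw [Finset.sum_div]
    exact Finset.sum_congr rfl fun i _ => div_mul_eq_mul_div _ _ _
  rw [e, ← sub_lt_iff_lt_add', lt_div_iff₀ hμ]
  linarith [hlag z hz]

theorem max_zero_abs_sub_one_le_abs_sub {g : ℝ} (hg : g ∈ Icc (-1) 1) (t : ℝ) :
    max 0 (|t| - 1) ≤ |g - t| := by
  refine max_le (abs_nonneg _) ?_
  linarith [abs_sub_abs_le_abs_sub t g, abs_le.2 hg, abs_sub_comm g t]

theorem exists_abs_sub_eq_max_zero_abs_sub_one (t : ℝ) :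
    ∃ g ∈ Icc (-1 : ℝ) 1, |g - t| = max 0 (|t| - 1) := by
  rcases le_or_gt |t| 1 with ht | ht
  · exact ⟨t, abs_le.1 ht, by simp [ht]⟩
  · rw [max_eq_right (by linarith)]
    rcases lt_abs.1 ht with ht | ht
    · exact ⟨1, by norm_num, by rw [abs_of_neg (by linarith), abs_of_pos (by linarith)]; ring⟩
    · exact ⟨-1, by norm_num, by rw [abs_of_pos (by linarith), abs_of_neg (by linarith)]; ring⟩

section BoxDuality

variable {ι κ : Type*} [Fintype ι] [Fintype κ]

theorem neg_sum_abs_le_sum_mul {z : κ → ℝ} (hz : ∀ j, z j ∈ Icc (-1) 1) (a : κ → ℝ) :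
    -∑ j, |a j| ≤ ∑ j, z j * a j := by
  rw [← Finset.sum_neg_distrib]
  refine Finset.sum_le_sum fun j _ => ?_
  calc -|a j| ≤ -|z j * a j| := by
        rw [neg_le_neg_iff, abs_mul]
        exact mul_le_of_le_one_left (abs_nonneg _) (abs_le.2 (hz j))
    _ ≤ z j * a j := neg_abs_le _

theorem exists_sum_mul_eq_neg_sum_abs (a : κ → ℝ) :
    ∃ z : κ → ℝ, (∀ j, z j ∈ Icc (-1) 1) ∧ ∑ j, z j * a j = -∑ j, |a j| := by
  refine ⟨fun j => if 0 ≤ a j then -1 else 1, fun j => by dsimp only; split_ifs <;> norm_num, ?_⟩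
  rw [← Finset.sum_neg_distrib]
  refine Finset.sum_congr rfl fun j _ => ?_
  dsimp only
  split_ifs with h
  · rw [abs_of_nonneg h]; ring
  · rw [abs_of_neg (not_le.1 h)]; ring

variable (c : ℝ) (F : ι → κ → ℝ) (b : ι → ℝ)

def lagrangeDual (g : κ → ℝ) (σ : ι → ℝ) : ℝ :=
  ∑ i, b i * σ i - c * ∑ j, |g j - ∑ i, F i j * σ i|

def slack (σ : ι → ℝ) : ℝ :=
  c * ∑ j, max 0 (|∑ i, F i j * σ i| - 1) - ∑ i, b i * σ i

noncomputable def primalValue (g : κ → ℝ) : ℝ :=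
  sInf {w : ℝ | ∃ z : κ → ℝ, (∀ j, -1 ≤ z j ∧ z j ≤ 1) ∧
    (∀ i, b i ≤ c * ∑ j, F i j * z j) ∧ w = c * ∑ j, z j * g j}

theorem objective_add_sum_mul_sub_eq (g z : κ → ℝ) (σ : ι → ℝ) :
    c * ∑ j, z j * g j + ∑ i, σ i * (b i - c * ∑ j, F i j * z j)
      = ∑ i, b i * σ i + c * ∑ j, z j * (g j - ∑ i, F i j * σ i) := by
  have hswap : ∑ i, ∑ j, σ i * (c * (F i j * z j)) = ∑ j, ∑ i, c * (z j * (F i j * σ i)) :=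
    Finset.sum_comm.trans (Finset.sum_congr rfl fun _ _ => Finset.sum_congr rfl fun _ _ => by ring)
  simp only [mul_sub, Finset.mul_sum, Finset.sum_sub_distrib, hswap, mul_comm (σ _) (b _)]
  ring

variable {c F b}

theorem lagrangeDual_le (hc : 0 ≤ c) {σ : ι → ℝ} (hσ : 0 ≤ σ) {z : κ → ℝ}
    (hz : ∀ j, z j ∈ Icc (-1) 1) (hzF : ∀ i, b i ≤ c * ∑ j, F i j * z j) (g : κ → ℝ) :
    lagrangeDual c F b g σ ≤ c * ∑ j, z j * g j := by
  have hpen : ∑ i, σ i * (b i - c * ∑ j, F i j * z j) ≤ 0 := Finset.sum_nonpos fun i _ =>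
    mul_nonpos_of_nonneg_of_nonpos (hσ i) (sub_nonpos.2 (hzF i))
  calc lagrangeDual c F b g σ = ∑ i, b i * σ i + c * -∑ j, |g j - ∑ i, F i j * σ i| := by
        rw [lagrangeDual, mul_neg, sub_eq_add_neg]
    _ ≤ ∑ i, b i * σ i + c * ∑ j, z j * (g j - ∑ i, F i j * σ i) := by
        gcongr
        exact neg_sum_abs_le_sum_mul hz _
    _ = c * ∑ j, z j * g j + ∑ i, σ i * (b i - c * ∑ j, F i j * z j) :=
        (objective_add_sum_mul_sub_eq c F b g z σ).symm
    _ ≤ c * ∑ j, z j * g j := by linarith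

theorem exists_lt_lagrangeDual {g : κ → ℝ}
    (hfeas : ∃ z : κ → ℝ, (∀ j, z j ∈ Icc (-1) 1) ∧ ∀ i, b i ≤ c * ∑ j, F i j * z j) {w : ℝ}
    (hw : ∀ z : κ → ℝ, (∀ j, z j ∈ Icc (-1) 1) → (∀ i, b i ≤ c * ∑ j, F i j * z j) →
      w < c * ∑ j, z j * g j) :
    ∃ σ : ι → ℝ, 0 ≤ σ ∧ w < lagrangeDual c F b g σ := by
  let φ : (κ → ℝ) →L[ℝ] ℝ := c • ∑ j, g j • ContinuousLinearMap.proj j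
  let h : (κ → ℝ) →L[ℝ] ι → ℝ :=
    ContinuousLinearMap.pi fun i => c • ∑ j, F i j • ContinuousLinearMap.proj j
  have hφ : ∀ z, φ z = c * ∑ j, z j * g j := by simp [φ, mul_comm]
  have hh : ∀ z i, h z i = c * ∑ j, F i j * z j := by simp [h]
  have hfeas' : ∀ z, b ≤ h z ↔ ∀ i, b i ≤ c * ∑ j, F i j * z j := by simp [Pi.le_def, hh]
  obtain ⟨z₀, hz₀, hz₀F⟩ := hfeas
  obtain ⟨σ, hσ, hlag⟩ := exists_lagrange_multipliers_lt (K := univ.pi fun _ => Icc (-1) 1)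
    (isCompact_univ_pi fun _ => isCompact_Icc) (convex_pi fun _ _ => convex_Icc _ _) φ h b
    ⟨z₀, mem_univ_pi.2 hz₀, (hfeas' z₀).2 hz₀F⟩
    (fun z hz hzF => by simpa [hφ] using hw z (mem_univ_pi.1 hz) ((hfeas' z).1 hzF))
  obtain ⟨z, hz, hza⟩ := exists_sum_mul_eq_neg_sum_abs fun j => g j - ∑ i, F i j * σ i
  refine ⟨σ, hσ, ?_⟩
  have := hlag z (mem_univ_pi.2 hz)
  simp only [hφ, hh, objective_add_sum_mul_sub_eq, hza] at this
  rwa [lagrangeDual, sub_eq_add_neg, ← mul_neg]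

theorem lagrangeDual_le_primalValue (hc : 0 ≤ c)
    (hfeas : ∃ z : κ → ℝ, (∀ j, z j ∈ Icc (-1) 1) ∧ ∀ i, b i ≤ c * ∑ j, F i j * z j)
    {σ : ι → ℝ} (hσ : 0 ≤ σ) (g : κ → ℝ) :
    lagrangeDual c F b g σ ≤ primalValue c F b g := by
  obtain ⟨z₀, hz₀, hz₀F⟩ := hfeas
  refine le_csInf ⟨_, z₀, hz₀, hz₀F, rfl⟩ ?_
  rintro _ ⟨z, hz, hzF, rfl⟩
  exact lagrangeDual_le hc hσ hz hzF g

theorem primalValue_le (hc : 0 ≤ c) {z : κ → ℝ} (hz : ∀ j, z j ∈ Icc (-1) 1)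
    (hzF : ∀ i, b i ≤ c * ∑ j, F i j * z j) (g : κ → ℝ) :
    primalValue c F b g ≤ c * ∑ j, z j * g j := by
  refine csInf_le ⟨lagrangeDual c F b g 0, ?_⟩ ⟨z, hz, hzF, rfl⟩
  rintro _ ⟨z, hz, hzF, rfl⟩
  exact lagrangeDual_le hc le_rfl hz hzF g

theorem lagrangeDual_le_neg_slack (hc : 0 ≤ c) {g : κ → ℝ} (hg : ∀ j, g j ∈ Icc (-1) 1)
    (σ : ι → ℝ) : lagrangeDual c F b g σ ≤ -slack c F b σ := by
  have := Finset.sum_le_sum fun j (_ : j ∈ Finset.univ) =>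
    max_zero_abs_sub_one_le_abs_sub (hg j) (∑ i, F i j * σ i)
  rw [lagrangeDual, slack, neg_sub]
  linarith [mul_le_mul_of_nonneg_left this hc]

variable (c F b) in
theorem exists_lagrangeDual_eq_neg_slack (σ : ι → ℝ) :
    ∃ g : κ → ℝ, (∀ j, g j ∈ Icc (-1) 1) ∧ lagrangeDual c F b g σ = -slack c F b σ := by
  choose g hg hgσ using fun j => exists_abs_sub_eq_max_zero_abs_sub_one (∑ i, F i j * σ i)
  exact ⟨g, hg, by rw [lagrangeDual, slack, neg_sub]; simp only [hgσ]⟩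

end BoxDuality

theorem csSup_eq_csSup_of_upperBounds_eq {α : Type*} [ConditionallyCompleteLinearOrder α]
    {s t : Set α} (hs : s.Nonempty) (ht : t.Nonempty) (h : upperBounds s = upperBounds t) :
    sSup s = sSup t := by
  by_cases hb : BddAbove s
  · exact (((isLUB_congr h).1 (isLUB_csSup hs hb)).csSup_eq ht).symm
  · have ht' : ¬BddAbove t := by rwa [BddAbove, ← h]
    rw [csSup_of_not_bddAbove hb, csSup_of_not_bddAbove ht']

theorem minimax_value_eq_neg_slack_general (n p : ℕ)
    (F : Fin p → Fin n → ℝ)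
    (b : Fin p → ℝ)
    (hfeas : ∃ z : Fin n → ℝ, (∀ j, -1 ≤ z j ∧ z j ≤ 1) ∧
      ∀ i, b i ≤ (1 / (n : ℝ)) * ∑ j, F i j * z j) :
    sSup {v : ℝ | ∃ g : Fin n → ℝ, (∀ j, -1 ≤ g j ∧ g j ≤ 1) ∧
        v = sInf {w : ℝ | ∃ z : Fin n → ℝ, (∀ j, -1 ≤ z j ∧ z j ≤ 1) ∧
          (∀ i, b i ≤ (1 / (n : ℝ)) * ∑ j, F i j * z j) ∧
          w = (1 / (n : ℝ)) * ∑ j, z j * g j}}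
    = sSup {v : ℝ | ∃ σ : Fin p → ℝ, (∀ i, 0 ≤ σ i) ∧
        v = -((1 / (n : ℝ)) * ∑ j, max 0 (|∑ i, F i j * σ i| - 1)
              - ∑ i, b i * σ i)} := by
  have hc : (0 : ℝ) ≤ 1 / n := by positivity
  -- strong duality only gives `w < dual value` for each `w` below the primal value, so the two
  -- suprema are compared through their upper bounds
  refine csSup_eq_csSup_of_upperBounds_eq ⟨_, 0, fun _ => by norm_num, rfl⟩
    ⟨_, 0, fun _ => le_rfl, rfl⟩ (Set.ext fun M => ⟨?_, ?_⟩)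
  · rintro hM _ ⟨σ, hσ, rfl⟩
    obtain ⟨g, hg, hgσ⟩ := exists_lagrangeDual_eq_neg_slack (1 / n : ℝ) F b σ
    calc -slack (1 / n : ℝ) F b σ = lagrangeDual (1 / n : ℝ) F b g σ := hgσ.symm
      _ ≤ primalValue (1 / n : ℝ) F b g := lagrangeDual_le_primalValue hc hfeas hσ g
      _ ≤ M := hM ⟨g, hg, rfl⟩
  · rintro hM _ ⟨g, hg, rfl⟩
    refine le_of_forall_lt_imp_le_of_dense fun w hw => ?_
    obtain ⟨σ, hσ, hwσ⟩ := exists_lt_lagrangeDual hfeas fun z hz hzF =>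
      hw.trans_le (primalValue_le hc hz hzF g)
    exact (hwσ.trans_le (lagrangeDual_le_neg_slack hc hg σ)).le.trans (hM ⟨σ, hσ, rfl⟩)

theorem minimax_value_eq_neg_slack (n p : ℕ) (hn : 0 < n)
    (F : Fin p → Fin n → ℝ) (hF : ∀ i j, |F i j| ≤ 1)
    (b : Fin p → ℝ)
    (hfeas : ∃ z : Fin n → ℝ, (∀ j, -1 ≤ z j ∧ z j ≤ 1) ∧
      ∀ i, b i ≤ (1 / (n : ℝ)) * ∑ j, F i j * z j) :
    sSup {v : ℝ | ∃ g : Fin n → ℝ, (∀ j, -1 ≤ g j ∧ g j ≤ 1) ∧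
        v = sInf {w : ℝ | ∃ z : Fin n → ℝ, (∀ j, -1 ≤ z j ∧ z j ≤ 1) ∧
          (∀ i, b i ≤ (1 / (n : ℝ)) * ∑ j, F i j * z j) ∧
          w = (1 / (n : ℝ)) * ∑ j, z j * g j}}
    = sSup {v : ℝ | ∃ σ : Fin p → ℝ, (∀ i, 0 ≤ σ i) ∧
        v = -((1 / (n : ℝ)) * ∑ j, max 0 (|∑ i, F i j * σ i| - 1)
              - ∑ i, b i * σ i)} :=
  minimax_value_eq_neg_slack_general n p F b hfeas
end
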